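/- Define the residual information RI(A;B) of two finite-valued random variables as the infimum, over all pairs of functions (f,g) such that f(A) = g(B) almost surely, of I(A;B | f(A)). If jointly distributed finite random variables T, U, V, W satisfy the Markov chains U − T − W (i.e., I(U;W|T)=0) and T − W − V (i.e., I(T;V|W)=0), then RI(T;W) ≤ RI((U,T);(V,W)). -/

import Mathlib

open scoped BigOperators

noncomputable section

/-- Probability that the random variable `X` takes the value `a`,
with respect to the probability mass function `p` on the finite sample space `Ω`. -/
def prob {Ω : Type*} [Fintype Ω] {α : Type*} [DecidableEq α]
    (p : Ω → ℝ) (X : Ω → α) (a : α) : ℝ :=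
  ∑ ω, if X ω = a then p ω else 0

/-- Shannon entropy (base 2) of the random variable `X`. -/
def ent {Ω : Type*} [Fintype Ω] {α : Type*} [Fintype α] [DecidableEq α]
    (p : Ω → ℝ) (X : Ω → α) : ℝ :=
  -∑ a, prob p X a * Real.logb 2 (prob p X a)

/-- Conditional entropy `H(X|Y)`. -/
def condEnt {Ω : Type*} [Fintype Ω] {α β : Type*} [Fintype α] [DecidableEq α]
    [Fintype β] [DecidableEq β] (p : Ω → ℝ) (X : Ω → α) (Y : Ω → β) : ℝ :=
  ent p (fun ω => (X ω, Y ω)) - ent p Y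

/-- Mutual information `I(X;Y)`. -/
def mi {Ω : Type*} [Fintype Ω] {α β : Type*} [Fintype α] [DecidableEq α]
    [Fintype β] [DecidableEq β] (p : Ω → ℝ) (X : Ω → α) (Y : Ω → β) : ℝ :=
  ent p X + ent p Y - ent p (fun ω => (X ω, Y ω))

/-- Conditional mutual information `I(X;Y|Z)`. -/
def cmi {Ω : Type*} [Fintype Ω] {α β γ : Type*} [Fintype α] [DecidableEq α]
    [Fintype β] [DecidableEq β] [Fintype γ] [DecidableEq γ]
    (p : Ω → ℝ) (X : Ω → α) (Y : Ω → β) (Z : Ω → γ) : ℝ :=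
  ent p (fun ω => (X ω, Z ω)) + ent p (fun ω => (Y ω, Z ω))
    - ent p (fun ω => (X ω, Y ω, Z ω)) - ent p Z

/-- Residual information `RI(A;B)`: the infimum of `I(A;B | f(A))` over all pairs of
functions `(f,g)` such that `f(A) = g(B)` almost surely. -/
def RI {Ω : Type*} [Fintype Ω] {α β : Type*} [Fintype α] [DecidableEq α]
    [Fintype β] [DecidableEq β] (p : Ω → ℝ) (A : Ω → α) (B : Ω → β) : ℝ :=
  sInf {r : ℝ | ∃ (f : α → α) (g : β → α),
    (∀ ω, p ω ≠ 0 → f (A ω) = g (B ω)) ∧ r = cmi p A B (fun ω => f (A ω))}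

set_option linter.unusedSectionVars false

section AuxRI
variable {Ω : Type*} [Fintype Ω] {α β γ : Type*}

lemma prob_congr [DecidableEq α] (p : Ω → ℝ) {X Y : Ω → α}
    (h : ∀ ω, p ω ≠ 0 → X ω = Y ω) : prob p X = prob p Y := by
  funext a
  refine Finset.sum_congr rfl fun ω _ => ?_
  by_cases hω : p ω = 0
  · simp [hω]
  · rw [h ω hω]

lemma prob_nonneg [DecidableEq α] {p : Ω → ℝ} (hp : ∀ ω, 0 ≤ p ω) (X : Ω → α) (a : α) :
    0 ≤ prob p X a :=
  Finset.sum_nonneg fun ω _ => by by_cases h : X ω = a <;> simp [h, hp ω]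

lemma sum_prob_mul [DecidableEq α] [Fintype α] (p : Ω → ℝ) (X : Ω → α) (F : α → ℝ) :
    ∑ a, prob p X a * F a = ∑ ω, p ω * F (X ω) := by
  simp only [prob, Finset.sum_mul, ite_mul, zero_mul]
  rw [Finset.sum_comm]
  refine Finset.sum_congr rfl fun ω _ => ?_
  simp

lemma sum_prob [DecidableEq α] [Fintype α] (p : Ω → ℝ) (X : Ω → α) :
    ∑ a, prob p X a = ∑ ω, p ω := by
  simpa using sum_prob_mul p X (fun _ => 1)

lemma prob_comp [DecidableEq α] [Fintype α] [DecidableEq β] (p : Ω → ℝ) (X : Ω → α)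
    (h : α → β) (b : β) :
    prob p (fun ω => h (X ω)) b = ∑ a, if h a = b then prob p X a else 0 := by
  have := sum_prob_mul p X (fun a => if h a = b then (1:ℝ) else 0)
  simp only [mul_ite, mul_one, mul_zero] at this
  rw [prob, ← this]

lemma prob_comp_inj [DecidableEq α] [DecidableEq β] (p : Ω → ℝ) (X : Ω → α)
    {e : α → β} (he : Function.Injective e) (a : α) :
    prob p (fun ω => e (X ω)) (e a) = prob p X a := by
  simp [prob, he.eq_iff]

lemma prob_le_comp [DecidableEq α] [DecidableEq β] {p : Ω → ℝ} (hp : ∀ ω, 0 ≤ p ω)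
    (X : Ω → α) (h : α → β) (a : α) :
    prob p X a ≤ prob p (fun ω => h (X ω)) (h a) := by
  refine Finset.sum_le_sum fun ω _ => ?_
  by_cases hx : X ω = a
  · simp [hx, hp ω]
  · by_cases hh : h (X ω) = h a <;> simp [hx, hh, hp ω]

lemma prob_apply_pos [DecidableEq α] {p : Ω → ℝ} (hp : ∀ ω, 0 ≤ p ω) (X : Ω → α)
    {ω : Ω} (hω : p ω ≠ 0) : 0 < prob p X (X ω) := by
  have h1 : 0 < p ω := lt_of_le_of_ne (hp ω) (Ne.symm hω)
  have : p ω ≤ prob p X (X ω) := by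
    have := Finset.single_le_sum (f := fun ω' => if X ω' = X ω then p ω' else 0)
      (fun i _ => by by_cases h : X i = X ω <;> simp [h, hp i]) (Finset.mem_univ ω)
    simpa [prob] using this
  linarith

end AuxRI

section AuxRI2
variable {Ω : Type*} [Fintype Ω] {α β γ : Type*}

lemma ent_congr [DecidableEq α] [Fintype α] (p : Ω → ℝ) {X Y : Ω → α}
    (h : ∀ ω, p ω ≠ 0 → X ω = Y ω) : ent p X = ent p Y := by
  rw [ent, ent, prob_congr p h]

lemma ent_comp_inj [DecidableEq α] [Fintype α] [DecidableEq β] [Fintype β]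
    (p : Ω → ℝ) (X : Ω → α) {e : α → β} (he : Function.Injective e) :
    ent p (fun ω => e (X ω)) = ent p X := by
  rw [ent, ent, neg_inj]
  calc ∑ b : β, prob p (fun ω => e (X ω)) b * Real.logb 2 (prob p (fun ω => e (X ω)) b)
      = ∑ b ∈ Finset.univ.image e, prob p (fun ω => e (X ω)) b *
          Real.logb 2 (prob p (fun ω => e (X ω)) b) := by
        refine (Finset.sum_subset (Finset.subset_univ _) ?_).symm
        intro b _ hb
        have : prob p (fun ω => e (X ω)) b = 0 := by
          refine Finset.sum_eq_zero fun ω _ => ?_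
          have : e (X ω) ≠ b := fun hEq => hb (Finset.mem_image.2 ⟨X ω, Finset.mem_univ _, hEq⟩)
          simp [this]
        simp [this]
    _ = ∑ a : α, prob p (fun ω => e (X ω)) (e a) *
          Real.logb 2 (prob p (fun ω => e (X ω)) (e a)) :=
        Finset.sum_image (fun a _ b _ h => he h)
    _ = ∑ a : α, prob p X a * Real.logb 2 (prob p X a) := by
        refine Finset.sum_congr rfl fun a _ => by rw [prob_comp_inj p X he]

lemma ent_omega [DecidableEq α] [Fintype α] (p : Ω → ℝ) (X : Ω → α) :
    ent p X = -∑ ω, p ω * Real.logb 2 (prob p X (X ω)) := by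
  rw [ent, sum_prob_mul p X (fun a => Real.logb 2 (prob p X a))]

lemma ent_le_ent_pair [DecidableEq α] [Fintype α] [DecidableEq β] [Fintype β]
    {p : Ω → ℝ} (hp : ∀ ω, 0 ≤ p ω) (X : Ω → α) (Y : Ω → β) :
    ent p X ≤ ent p (fun ω => (X ω, Y ω)) := by
  rw [ent_omega, ent_omega, neg_le_neg_iff]
  refine Finset.sum_le_sum fun ω _ => ?_
  by_cases hω : p ω = 0
  · simp [hω]
  · have h1 : 0 < p ω := lt_of_le_of_ne (hp ω) (Ne.symm hω)
    have h2 : 0 < prob p (fun ω => (X ω, Y ω)) (X ω, Y ω) :=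
      prob_apply_pos hp (fun ω => (X ω, Y ω)) hω
    have h3 : prob p (fun ω => (X ω, Y ω)) (X ω, Y ω) ≤ prob p X (X ω) := by
      simpa using prob_le_comp hp (fun ω => (X ω, Y ω)) Prod.fst (X ω, Y ω)
    have h4 : 0 < prob p X (X ω) := prob_apply_pos hp X hω
    have := (Real.logb_le_logb (b := 2) (by norm_num) h2 h4).2 h3
    nlinarith [this]
end AuxRI2

section AuxRI3
variable {Ω : Type*} [Fintype Ω] {α β γ : Type*}
variable [DecidableEq α] [Fintype α] [DecidableEq β] [Fintype β] [DecidableEq γ] [Fintype γ]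

lemma marg_pair_fst (p : Ω → ℝ) (A : Ω → α) (B : Ω → β) (b : β) :
    prob p B b = ∑ a, prob p (fun ω => (A ω, B ω)) (a, b) := by
  unfold prob
  rw [Finset.sum_comm]
  refine Finset.sum_congr rfl fun ω _ => ?_
  by_cases hb : B ω = b
  · simp [Prod.ext_iff, hb]
  · simp [Prod.ext_iff, hb]

lemma cmi_omega {p : Ω → ℝ} (hp : ∀ ω, 0 ≤ p ω) (X : Ω → α) (Y : Ω → β) (Z : Ω → γ) :
    cmi p X Y Z = ∑ ω, p ω * Real.logb 2
      (prob p (fun ω => (X ω, Y ω, Z ω)) (X ω, Y ω, Z ω) * prob p Z (Z ω) /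
        (prob p (fun ω => (X ω, Z ω)) (X ω, Z ω) * prob p (fun ω => (Y ω, Z ω)) (Y ω, Z ω))) := by
  rw [cmi, ent_omega, ent_omega, ent_omega, ent_omega]
  have : ∀ (a b c d : ℝ), -a + -b - -c - -d = (c + d) - (a + b) := by intros; ring
  rw [this]
  rw [← Finset.sum_add_distrib, ← Finset.sum_add_distrib, ← Finset.sum_sub_distrib]
  refine Finset.sum_congr rfl fun ω _ => ?_
  by_cases hω : p ω = 0
  · simp [hω]
  · have h3 : 0 < prob p (fun ω => (X ω, Y ω, Z ω)) (X ω, Y ω, Z ω) :=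
      prob_apply_pos hp _ hω
    have h4 : 0 < prob p Z (Z ω) := prob_apply_pos hp _ hω
    have h1 : 0 < prob p (fun ω => (X ω, Z ω)) (X ω, Z ω) := prob_apply_pos hp _ hω
    have h2 : 0 < prob p (fun ω => (Y ω, Z ω)) (Y ω, Z ω) := prob_apply_pos hp _ hω
    rw [Real.logb_div (by positivity) (by positivity), Real.logb_mul h3.ne' h4.ne',
      Real.logb_mul h1.ne' h2.ne']
    ring
end AuxRI3

section AuxRI4
variable {Ω : Type*} [Fintype Ω] {α β γ : Type*}
variable [DecidableEq α] [Fintype α] [DecidableEq β] [Fintype β] [DecidableEq γ] [Fintype γ]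

lemma cmi_main {p : Ω → ℝ} (hp : ∀ ω, 0 ≤ p ω) (hsum : ∑ ω, p ω = 1)
    (X : Ω → α) (Y : Ω → β) (Z : Ω → γ) :
    0 ≤ cmi p X Y Z ∧ (cmi p X Y Z = 0 → ∀ x y z,
      prob p (fun ω => (X ω, Y ω, Z ω)) (x, y, z) * prob p Z z =
        prob p (fun ω => (X ω, Z ω)) (x, z) * prob p (fun ω => (Y ω, Z ω)) (y, z)) := by
  classical
  set q3 : α × β × γ → ℝ := prob p (fun ω => (X ω, Y ω, Z ω)) with hq3
  set qXZ : α × γ → ℝ := prob p (fun ω => (X ω, Z ω)) with hqXZ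
  set qYZ : β × γ → ℝ := prob p (fun ω => (Y ω, Z ω)) with hqYZ
  set qZ : γ → ℝ := prob p Z with hqZ
  -- pointwise nonneg & domination facts
  have hq3n : ∀ v, 0 ≤ q3 v := fun v => prob_nonneg hp _ v
  have hqXZn : ∀ v, 0 ≤ qXZ v := fun v => prob_nonneg hp _ v
  have hqYZn : ∀ v, 0 ≤ qYZ v := fun v => prob_nonneg hp _ v
  have hqZn : ∀ z, 0 ≤ qZ z := fun z => prob_nonneg hp _ z
  have dom1 : ∀ x y z, q3 (x, y, z) ≤ qXZ (x, z) := by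
    intro x y z
    simpa [hq3, hqXZ] using
      prob_le_comp hp (fun ω => (X ω, Y ω, Z ω)) (fun v => (v.1, v.2.2)) (x, y, z)
  have dom2 : ∀ x y z, q3 (x, y, z) ≤ qYZ (y, z) := by
    intro x y z
    simpa [hq3, hqYZ] using
      prob_le_comp hp (fun ω => (X ω, Y ω, Z ω)) (fun v => (v.2.1, v.2.2)) (x, y, z)
  have dom3 : ∀ x y z, q3 (x, y, z) ≤ qZ z := by
    intro x y z
    simpa [hq3, hqZ] using
      prob_le_comp hp (fun ω => (X ω, Y ω, Z ω)) (fun v => v.2.2) (x, y, z)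
  have domZ : ∀ x z, qXZ (x, z) ≤ qZ z := by
    intro x z
    simpa [hqXZ, hqZ] using prob_le_comp hp (fun ω => (X ω, Z ω)) (fun v => v.2) (x, z)
  -- marginal sums
  have margX : ∀ z, ∑ x, qXZ (x, z) = qZ z := fun z => (marg_pair_fst p X Z z).symm
  have margY : ∀ z, ∑ y, qYZ (y, z) = qZ z := fun z => (marg_pair_fst p Y Z z).symm
  have hq3sum : ∑ v, q3 v = 1 := by rw [hq3, sum_prob]; exact hsum
  -- the integrand
  set G : α × β × γ → ℝ := fun v =>
    Real.logb 2 (q3 v * qZ v.2.2 / (qXZ (v.1, v.2.2) * qYZ (v.2.1, v.2.2))) with hG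
  have hcmi : cmi p X Y Z = ∑ v, q3 v * G v := by
    rw [cmi_omega hp, hq3, ← sum_prob_mul p (fun ω => (X ω, Y ω, Z ω)) G]
  -- bounding functions
  set A : α × β × γ → ℝ := fun v =>
    if q3 v = 0 then 0 else qXZ (v.1, v.2.2) * qYZ (v.2.1, v.2.2) / qZ v.2.2 with hA
  set B : α × β × γ → ℝ := fun v => (A v - q3 v) / Real.log 2 with hB
  have hlog2 : (0:ℝ) < Real.log 2 := Real.log_pos (by norm_num)
  -- positivity on support
  have pos : ∀ v : α × β × γ, q3 v ≠ 0 →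
      0 < q3 v ∧ 0 < qXZ (v.1, v.2.2) ∧ 0 < qYZ (v.2.1, v.2.2) ∧ 0 < qZ v.2.2 := by
    rintro ⟨x, y, z⟩ h
    have h0 : 0 < q3 (x, y, z) := lt_of_le_of_ne (hq3n _) (Ne.symm h)
    exact ⟨h0, lt_of_lt_of_le h0 (dom1 x y z), lt_of_lt_of_le h0 (dom2 x y z),
      lt_of_lt_of_le h0 (dom3 x y z)⟩
  -- key termwise bound
  have key : ∀ v : α × β × γ, q3 v * (-(G v)) ≤ B v := by
    rintro ⟨x, y, z⟩
    by_cases h : q3 (x, y, z) = 0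
    · simp [hB, hA, h]
    · obtain ⟨h0, h1, h2, h3⟩ := pos (x, y, z) h
      set R : ℝ := qXZ (x, z) * qYZ (y, z) / (q3 (x, y, z) * qZ z) with hR
      have hRpos : 0 < R := by positivity
      have hGv : -(G (x, y, z)) = Real.log R / Real.log 2 := by
        rw [hG]
        simp only []
        rw [Real.logb, ← neg_div, ← Real.log_inv]
        congr 2
        rw [hR]
        field_simp
      have hlogR : Real.log R ≤ R - 1 := Real.log_le_sub_one_of_pos hRpos
      have hq3R : q3 (x, y, z) * R = qXZ (x, z) * qYZ (y, z) / qZ z := by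
        rw [hR]; field_simp
      rw [hGv, hB]
      simp only [hA, if_neg h]
      have hnum : q3 (x, y, z) * Real.log R ≤ qXZ (x, z) * qYZ (y, z) / qZ z - q3 (x, y, z) := by
        have h5 := mul_le_mul_of_nonneg_left hlogR h0.le
        nlinarith [hq3R]
      rw [show q3 (x, y, z) * (Real.log R / Real.log 2) =
          q3 (x, y, z) * Real.log R / Real.log 2 by ring]
      gcongr
  have key2 : ∀ v : α × β × γ, q3 v ≠ 0 → q3 v * (-(G v)) = B v →
      qXZ (v.1, v.2.2) * qYZ (v.2.1, v.2.2) = q3 v * qZ v.2.2 := by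
    rintro ⟨x, y, z⟩ h hEq
    obtain ⟨h0, h1, h2, h3⟩ := pos (x, y, z) h
    set R : ℝ := qXZ (x, z) * qYZ (y, z) / (q3 (x, y, z) * qZ z) with hR
    have hRpos : 0 < R := by positivity
    have hGv : -(G (x, y, z)) = Real.log R / Real.log 2 := by
      rw [hG]
      simp only []
      rw [Real.logb, ← neg_div, ← Real.log_inv]
      congr 2
      rw [hR]
      field_simp
    have hq3R : q3 (x, y, z) * R = qXZ (x, z) * qYZ (y, z) / qZ z := by
      rw [hR]; field_simp
    rw [hGv, hB] at hEq
    simp only [hA, if_neg h] at hEq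
    have hEq2 : q3 (x, y, z) * Real.log R = q3 (x, y, z) * R - q3 (x, y, z) := by
      have h4 : q3 (x, y, z) * Real.log R / Real.log 2 =
          (qXZ (x, z) * qYZ (y, z) / qZ z - q3 (x, y, z)) / Real.log 2 := by
        rw [← hEq]; ring
      rw [div_eq_mul_inv, div_eq_mul_inv] at h4
      have h5 := mul_right_cancel₀ (inv_ne_zero hlog2.ne') h4
      rw [h5, ← hq3R]
    have hReq : R = 1 := by
      by_contra hne
      have h6 := Real.log_lt_sub_one_of_pos hRpos hne
      nlinarith [mul_lt_mul_of_pos_left h6 h0]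
    rw [hReq, mul_one] at hq3R
    field_simp at hq3R
    linarith [hq3R]
  -- the dominating sum
  set A' : α × β × γ → ℝ := fun v =>
    if qZ v.2.2 = 0 then 0 else qXZ (v.1, v.2.2) * qYZ (v.2.1, v.2.2) / qZ v.2.2 with hA'
  have hAleA' : ∀ v, A v ≤ A' v := by
    rintro ⟨x, y, z⟩
    by_cases h : q3 (x, y, z) = 0
    · simp only [hA, hA', if_pos h]
      by_cases hz : qZ z = 0
      · simp [hz]
      · simp only [if_neg hz]
        exact div_nonneg (mul_nonneg (hqXZn _) (hqYZn _)) (hqZn _)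
    · obtain ⟨h0, h1, h2, h3⟩ := pos (x, y, z) h
      simp only [hA, hA', if_neg h, if_neg h3.ne']
      exact le_refl _
  have hsumA' : ∑ v, A' v = 1 := by
    have h1 : ∑ v : α × β × γ, A' v = ∑ x, ∑ y, ∑ z, A' (x, y, z) := by
      rw [Fintype.sum_prod_type]
      exact Finset.sum_congr rfl fun x _ => Fintype.sum_prod_type _
    have h2 : ∀ x : α, ∑ y : β, ∑ z : γ, A' (x, y, z) = ∑ z, ∑ y, A' (x, y, z) :=
      fun x => Finset.sum_comm
    have h3 : ∑ x : α, ∑ z : γ, ∑ y : β, A' (x, y, z) =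
        ∑ z, ∑ x, ∑ y, A' (x, y, z) := Finset.sum_comm
    rw [h1]
    simp_rw [h2]
    rw [h3]
    have h4 : ∀ z, ∑ x, ∑ y, A' (x, y, z) = qZ z := by
      intro z
      by_cases hz : qZ z = 0
      · simp [hA', hz]
      · simp only [hA', if_neg hz]
        have h5 : ∀ (x : α) (y : β), qXZ (x, z) * qYZ (y, z) / qZ z =
            qXZ (x, z) / qZ z * qYZ (y, z) := by intros; ring
        simp_rw [h5, ← Finset.mul_sum, margY, div_mul_cancel₀ _ hz, margX]
    simp_rw [h4]
    rw [hqZ, sum_prob]; exact hsum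
  have hsumA : ∑ v, A v ≤ 1 := by
    calc ∑ v, A v ≤ ∑ v, A' v := Finset.sum_le_sum fun v _ => hAleA' v
    _ = 1 := hsumA'
  have hsumB : ∑ v, B v = (∑ v, A v - 1) / Real.log 2 := by
    simp only [hB]
    rw [← Finset.sum_div, Finset.sum_sub_distrib, hq3sum]
  have hsumBle : ∑ v, B v ≤ 0 := by
    rw [hsumB]
    apply div_nonpos_of_nonpos_of_nonneg _ hlog2.le
    linarith
  have hnegcmi : -cmi p X Y Z = ∑ v, q3 v * (-(G v)) := by
    rw [hcmi, ← Finset.sum_neg_distrib]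
    exact Finset.sum_congr rfl fun v _ => by ring
  constructor
  · have : -cmi p X Y Z ≤ 0 := by
      rw [hnegcmi]
      calc ∑ v, q3 v * (-(G v)) ≤ ∑ v, B v := Finset.sum_le_sum fun v _ => key v
      _ ≤ 0 := hsumBle
    linarith
  · intro hzero x y z
    have hsum0 : ∑ v, q3 v * (-(G v)) = 0 := by rw [← hnegcmi, hzero]; ring
    have hBzero : ∑ v, B v = 0 :=
      le_antisymm hsumBle (by rw [← hsum0]; exact Finset.sum_le_sum fun v _ => key v)
    have hterm : ∀ v ∈ Finset.univ, q3 v * (-(G v)) = B v := by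
      have h7 : ∑ v, (B v - q3 v * (-(G v))) = 0 := by
        rw [Finset.sum_sub_distrib, hsum0, hBzero]; ring
      intro v _
      have h8 := (Finset.sum_eq_zero_iff_of_nonneg
        (fun v _ => sub_nonneg.2 (key v))).1 h7 v (Finset.mem_univ v)
      linarith [h8]
    have hAeq : ∀ v, A v = A' v := by
      have h9 : ∑ v, A v = 1 := by
        have := hsumB
        rw [hBzero] at this
        have h10 := div_eq_zero_iff.1 this.symm
        rcases h10 with h | h
        · linarith
        · exact absurd h hlog2.ne'
      have h11 : ∑ v, (A' v - A v) = 0 := by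
        rw [Finset.sum_sub_distrib, h9, hsumA']; ring
      intro v
      have h12 := (Finset.sum_eq_zero_iff_of_nonneg
        (fun v _ => sub_nonneg.2 (hAleA' v))).1 h11 v (Finset.mem_univ v)
      linarith [h12]
    by_cases hz : qZ z = 0
    · have h13 : qXZ (x, z) = 0 := le_antisymm (hz ▸ domZ x z) (hqXZn _)
      have h14 : q3 (x, y, z) = 0 := le_antisymm (hz ▸ dom3 x y z) (hq3n _)
      rw [h13, h14, hz]; ring
    · by_cases h0 : q3 (x, y, z) = 0
      · have h15 : A (x, y, z) = 0 := by simp [hA, h0]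
        have h16 := hAeq (x, y, z)
        rw [h15] at h16
        simp only [hA', if_neg hz] at h16
        have h17 : qXZ (x, z) * qYZ (y, z) = 0 := by
          rw [eq_comm, div_eq_zero_iff] at h16
          rcases h16 with h | h
          · exact h
          · exact absurd h hz
        rw [h0, h17]; ring
      · have h18 := key2 (x, y, z) h0 (hterm (x, y, z) (Finset.mem_univ _))
        simpa using h18.symm
end AuxRI4

section AuxRI5
variable {Ω : Type*} [Fintype Ω] {α β β' γ : Type*}
variable [DecidableEq α] [Fintype α] [DecidableEq β] [Fintype β]
variable [DecidableEq β'] [Fintype β'] [DecidableEq γ] [Fintype γ]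

lemma cmi_nonneg {p : Ω → ℝ} (hp : ∀ ω, 0 ≤ p ω) (hsum : ∑ ω, p ω = 1)
    (X : Ω → α) (Y : Ω → β) (Z : Ω → γ) : 0 ≤ cmi p X Y Z :=
  (cmi_main hp hsum X Y Z).1

lemma cmi_eq_zero_fact {p : Ω → ℝ} (hp : ∀ ω, 0 ≤ p ω) (hsum : ∑ ω, p ω = 1)
    (X : Ω → α) (Y : Ω → β) (Z : Ω → γ) (h : cmi p X Y Z = 0) : ∀ x y z,
      prob p (fun ω => (X ω, Y ω, Z ω)) (x, y, z) * prob p Z z =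
        prob p (fun ω => (X ω, Z ω)) (x, z) * prob p (fun ω => (Y ω, Z ω)) (y, z) :=
  (cmi_main hp hsum X Y Z).2 h

lemma cmi_of_fact {p : Ω → ℝ} (hp : ∀ ω, 0 ≤ p ω)
    (X : Ω → α) (Y : Ω → β) (Z : Ω → γ)
    (h : ∀ x y z, prob p (fun ω => (X ω, Y ω, Z ω)) (x, y, z) * prob p Z z =
        prob p (fun ω => (X ω, Z ω)) (x, z) * prob p (fun ω => (Y ω, Z ω)) (y, z)) :
    cmi p X Y Z = 0 := by
  rw [cmi_omega hp]
  refine Finset.sum_eq_zero fun ω _ => ?_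
  by_cases hω : p ω = 0
  · simp [hω]
  · have h1 : 0 < prob p (fun ω => (X ω, Z ω)) (X ω, Z ω) := prob_apply_pos hp _ hω
    have h2 : 0 < prob p (fun ω => (Y ω, Z ω)) (Y ω, Z ω) := prob_apply_pos hp _ hω
    rw [h (X ω) (Y ω) (Z ω), div_self (by positivity), Real.logb_one, mul_zero]

lemma cmi_comm (p : Ω → ℝ) (X : Ω → α) (Y : Ω → β) (Z : Ω → γ) :
    cmi p X Y Z = cmi p Y X Z := by
  have h : ent p (fun ω => (Y ω, X ω, Z ω)) = ent p (fun ω => (X ω, Y ω, Z ω)) :=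
    ent_comp_inj p (fun ω => (X ω, Y ω, Z ω)) (e := fun v => (v.2.1, v.1, v.2.2))
      (by intro v w hvw; simp only [Prod.ext_iff] at hvw ⊢; tauto)
  rw [cmi, cmi]
  linarith [h]

lemma cmi_decomp (p : Ω → ℝ) (X : Ω → α) (Y : Ω → β) (Y' : Ω → β') (Z : Ω → γ) :
    cmi p X (fun ω => (Y ω, Y' ω)) Z =
      cmi p X Y' Z + cmi p X Y (fun ω => (Y' ω, Z ω)) := by
  have a2 : ent p (fun ω => (Y ω, Y' ω, Z ω)) =
      ent p (fun ω => ((Y ω, Y' ω), Z ω)) :=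
    ent_comp_inj p (fun ω => ((Y ω, Y' ω), Z ω)) (e := fun v => (v.1.1, v.1.2, v.2))
      (by intro v w hvw; simp only [Prod.ext_iff] at hvw ⊢; tauto)
  have a3 : ent p (fun ω => (X ω, Y ω, Y' ω, Z ω)) =
      ent p (fun ω => (X ω, (Y ω, Y' ω), Z ω)) :=
    ent_comp_inj p (fun ω => (X ω, (Y ω, Y' ω), Z ω))
      (e := fun v => (v.1, v.2.1.1, v.2.1.2, v.2.2))
      (by intro v w hvw; simp only [Prod.ext_iff] at hvw ⊢; tauto)
  rw [cmi, cmi, cmi]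
  linarith [a2, a3]
end AuxRI5


theorem stmt2 {Ω : Type*} [Fintype Ω] {τ υ ν ρ : Type*}
    [Fintype τ] [DecidableEq τ] [Fintype υ] [DecidableEq υ]
    [Fintype ν] [DecidableEq ν] [Fintype ρ] [DecidableEq ρ]
    (p : Ω → ℝ) (hp : ∀ ω, 0 ≤ p ω) (hsum : ∑ ω, p ω = 1)
    (T : Ω → τ) (U : Ω → υ) (V : Ω → ν) (W : Ω → ρ)
    (hMarkov1 : cmi p U W T = 0)
    (hMarkov2 : cmi p T V W = 0) :
    RI p T W ≤ RI p (fun ω => (U ω, T ω)) (fun ω => (V ω, W ω)) := by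
  classical
  obtain ⟨ω0, hω0⟩ : ∃ ω, p ω ≠ 0 := by
    by_contra hcon
    push_neg at hcon
    rw [Finset.sum_eq_zero (fun ω _ => hcon ω)] at hsum
    exact one_ne_zero hsum.symm
  set R : τ → τ → Prop := fun t t' => ∃ w, prob p (fun ω => (T ω, W ω)) (t, w) ≠ 0 ∧
      prob p (fun ω => (T ω, W ω)) (t', w) ≠ 0 with hRdef
  letI st : Setoid τ := ⟨Relation.EqvGen R, Relation.EqvGen.is_equivalence R⟩
  set f' : τ → τ := fun t => (Quotient.mk st t).out with hf'def
  have f'_eq : ∀ t t' : τ, Relation.EqvGen R t t' → f' t = f' t' :=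
    fun t t' h => congrArg Quotient.out (Quotient.sound h)
  have f'_rev : ∀ t t' : τ, f' t = f' t' → Relation.EqvGen R t t' :=
    fun t t' h => Quotient.exact (Quotient.out_inj.1 h)
  set g' : ρ → τ := fun w =>
    if h : ∃ t, prob p (fun ω => (T ω, W ω)) (t, w) ≠ 0 then f' h.choose
    else f' (T ω0) with hg'def
  -- support facts
  have probTW_le_T : ∀ t w, prob p (fun ω => (T ω, W ω)) (t, w) ≤ prob p T t := by
    intro t w
    simpa using prob_le_comp hp (fun ω => (T ω, W ω)) Prod.fst (t, w)
  have probTW_le_W : ∀ t w, prob p (fun ω => (T ω, W ω)) (t, w) ≤ prob p W w := by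
    intro t w
    simpa using prob_le_comp hp (fun ω => (T ω, W ω)) Prod.snd (t, w)
  have hfg : ∀ ω, p ω ≠ 0 → f' (T ω) = g' (W ω) := by
    intro ω hω
    have hTW : prob p (fun ω => (T ω, W ω)) (T ω, W ω) ≠ 0 :=
      (prob_apply_pos hp (fun ω => (T ω, W ω)) hω).ne'
    have hEx : ∃ t, prob p (fun ω' => (T ω', W ω')) (t, W ω) ≠ 0 := ⟨T ω, hTW⟩
    rw [hg'def]
    simp only [dif_pos hEx]
    exact f'_eq _ _ (Relation.EqvGen.rel _ _ ⟨W ω, hTW, hEx.choose_spec⟩)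
  rw [RI, RI]
  refine le_csInf ⟨_, fun _ => (U ω0, T ω0), fun _ => (U ω0, T ω0), fun ω _ => rfl, rfl⟩ ?_
  rintro b ⟨f, g, hfgC0, rfl⟩
  have hfgC : ∀ ω, p ω ≠ 0 → f (U ω, T ω) = g (V ω, W ω) := hfgC0
  have h_bdd : BddBelow {r : ℝ | ∃ (f1 : τ → τ) (g1 : ρ → τ),
      (∀ ω, p ω ≠ 0 → f1 (T ω) = g1 (W ω)) ∧ r = cmi p T W (fun ω => f1 (T ω))} := by
    refine ⟨0, ?_⟩
    rintro r ⟨f1, g1, hh, rfl⟩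
    exact cmi_nonneg hp hsum _ _ _
  have h_in : cmi p T W (fun ω => f' (T ω)) ∈ {r : ℝ | ∃ (f1 : τ → τ) (g1 : ρ → τ),
      (∀ ω, p ω ≠ 0 → f1 (T ω) = g1 (W ω)) ∧ r = cmi p T W (fun ω => f1 (T ω))} :=
    ⟨f', g', hfg, rfl⟩
  have step1 : cmi p T W (fun ω => f' (T ω)) ≤ cmi p T W (fun ω => f (U ω, T ω)) := by
    have mk1 := cmi_eq_zero_fact hp hsum U W T hMarkov1
    have mk2 := cmi_eq_zero_fact hp hsum T V W hMarkov2
    -- expansions of C-involving probabilities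
    have eCT : ∀ c t, prob p (fun ω => (f (U ω, T ω), T ω)) (c, t) =
        ∑ u, if f (u, t) = c then prob p (fun ω => (U ω, T ω)) (u, t) else 0 := by
      intro c t
      calc prob p (fun ω => (f (U ω, T ω), T ω)) (c, t)
          = ∑ v : υ × τ, if (f v, v.2) = (c, t) then prob p (fun ω => (U ω, T ω)) v else 0 := by
            simpa using prob_comp p (fun ω => (U ω, T ω)) (fun v => (f v, v.2)) (c, t)
        _ = ∑ u, if f (u, t) = c then prob p (fun ω => (U ω, T ω)) (u, t) else 0 := by
            rw [Fintype.sum_prod_type]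
            refine Finset.sum_congr rfl fun u _ => ?_
            rw [Finset.sum_eq_single t (fun t' _ ht' => by simp [Prod.ext_iff, ht'])
              (fun h => absurd (Finset.mem_univ t) h)]
            simp [Prod.ext_iff]
    have eWCT : ∀ w c t, prob p (fun ω => (W ω, f (U ω, T ω), T ω)) (w, c, t) =
        ∑ u, if f (u, t) = c then prob p (fun ω => (U ω, W ω, T ω)) (u, w, t) else 0 := by
      intro w c t
      calc prob p (fun ω => (W ω, f (U ω, T ω), T ω)) (w, c, t)
          = ∑ v : υ × ρ × τ, if (v.2.1, f (v.1, v.2.2), v.2.2) = (w, c, t) then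
              prob p (fun ω => (U ω, W ω, T ω)) v else 0 := by
            simpa using prob_comp p (fun ω => (U ω, W ω, T ω))
              (fun v => (v.2.1, f (v.1, v.2.2), v.2.2)) (w, c, t)
        _ = ∑ u, if f (u, t) = c then prob p (fun ω => (U ω, W ω, T ω)) (u, w, t) else 0 := by
            rw [Fintype.sum_prod_type]
            refine Finset.sum_congr rfl fun u _ => ?_
            rw [Fintype.sum_prod_type]
            rw [Finset.sum_eq_single w (fun w' _ hw' => by
              refine Finset.sum_eq_zero fun t' _ => by simp [Prod.ext_iff, hw'])
              (fun h => absurd (Finset.mem_univ w) h)]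
            rw [Finset.sum_eq_single t (fun t' _ ht' => by simp [Prod.ext_iff, ht'])
              (fun h => absurd (Finset.mem_univ t) h)]
            simp [Prod.ext_iff]
    have fact1 : ∀ w c t, prob p (fun ω => (W ω, f (U ω, T ω), T ω)) (w, c, t) * prob p T t =
        prob p (fun ω => (W ω, T ω)) (w, t) *
          prob p (fun ω => (f (U ω, T ω), T ω)) (c, t) := by
      intro w c t
      rw [eWCT, eCT, Finset.sum_mul, Finset.mul_sum]
      refine Finset.sum_congr rfl fun u _ => ?_
      by_cases h : f (u, t) = c
      · simp only [if_pos h]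
        rw [mk1 u w t]
        ring
      · simp [h]
    have eCW : ∀ c w, prob p (fun ω => (f (U ω, T ω), W ω)) (c, w) =
        ∑ x, if g (x, w) = c then prob p (fun ω => (V ω, W ω)) (x, w) else 0 := by
      intro c w
      have a1 : prob p (fun ω => (f (U ω, T ω), W ω)) =
          prob p (fun ω => (g (V ω, W ω), W ω)) :=
        prob_congr p (fun ω hω => by rw [hfgC ω hω])
      calc prob p (fun ω => (f (U ω, T ω), W ω)) (c, w)
          = ∑ v : ν × ρ, if (g v, v.2) = (c, w) then prob p (fun ω => (V ω, W ω)) v else 0 := by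
            rw [a1]
            simpa using prob_comp p (fun ω => (V ω, W ω)) (fun v => (g v, v.2)) (c, w)
        _ = ∑ x, if g (x, w) = c then prob p (fun ω => (V ω, W ω)) (x, w) else 0 := by
            rw [Fintype.sum_prod_type]
            refine Finset.sum_congr rfl fun x _ => ?_
            rw [Finset.sum_eq_single w (fun w' _ hw' => by simp [Prod.ext_iff, hw'])
              (fun h => absurd (Finset.mem_univ w) h)]
            simp [Prod.ext_iff]
    have eTCW : ∀ t c w, prob p (fun ω => (T ω, f (U ω, T ω), W ω)) (t, c, w) =
        ∑ x, if g (x, w) = c then prob p (fun ω => (T ω, V ω, W ω)) (t, x, w) else 0 := by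
      intro t c w
      have a1 : prob p (fun ω => (T ω, f (U ω, T ω), W ω)) =
          prob p (fun ω => (T ω, g (V ω, W ω), W ω)) :=
        prob_congr p (fun ω hω => by rw [hfgC ω hω])
      calc prob p (fun ω => (T ω, f (U ω, T ω), W ω)) (t, c, w)
          = ∑ v : τ × ν × ρ, if (v.1, g (v.2.1, v.2.2), v.2.2) = (t, c, w) then
              prob p (fun ω => (T ω, V ω, W ω)) v else 0 := by
            rw [a1]
            simpa using prob_comp p (fun ω => (T ω, V ω, W ω))
              (fun v => (v.1, g (v.2.1, v.2.2), v.2.2)) (t, c, w)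
        _ = ∑ x, if g (x, w) = c then prob p (fun ω => (T ω, V ω, W ω)) (t, x, w) else 0 := by
            rw [Fintype.sum_prod_type]
            rw [Finset.sum_eq_single t (fun t' _ ht' => by
              refine Finset.sum_eq_zero fun v' _ => by simp [Prod.ext_iff, ht'])
              (fun h => absurd (Finset.mem_univ t) h)]
            rw [Fintype.sum_prod_type]
            refine Finset.sum_congr rfl fun x _ => ?_
            rw [Finset.sum_eq_single w (fun w' _ hw' => by simp [Prod.ext_iff, hw'])
              (fun h => absurd (Finset.mem_univ w) h)]
            simp [Prod.ext_iff]
    have fact2 : ∀ t c w, prob p (fun ω => (T ω, f (U ω, T ω), W ω)) (t, c, w) * prob p W w =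
        prob p (fun ω => (T ω, W ω)) (t, w) *
          prob p (fun ω => (f (U ω, T ω), W ω)) (c, w) := by
      intro t c w
      rw [eTCW, eCW, Finset.sum_mul, Finset.mul_sum]
      refine Finset.sum_congr rfl fun x _ => ?_
      by_cases h : g (x, w) = c
      · simp only [if_pos h]
        exact mk2 t x w
      · simp [h]
    have crossE : ∀ t w, prob p (fun ω => (T ω, W ω)) (t, w) ≠ 0 → ∀ c,
        prob p (fun ω => (f (U ω, T ω), T ω)) (c, t) * prob p W w =
        prob p (fun ω => (f (U ω, T ω), W ω)) (c, w) * prob p T t := by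
      intro t w htw c
      have r1 : prob p (fun ω => (W ω, f (U ω, T ω), T ω)) (w, c, t) =
          prob p (fun ω => (T ω, f (U ω, T ω), W ω)) (t, c, w) := by
        simpa using prob_comp_inj p (fun ω => (T ω, f (U ω, T ω), W ω))
          (e := fun v => (v.2.2, v.2.1, v.1))
          (by intro a b h; simp only [Prod.ext_iff] at h ⊢; tauto) (t, c, w)
      have r2 : prob p (fun ω => (W ω, T ω)) (w, t) = prob p (fun ω => (T ω, W ω)) (t, w) := by
        simpa using prob_comp_inj p (fun ω => (T ω, W ω)) (e := fun v => (v.2, v.1))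
          (by intro a b h; simp only [Prod.ext_iff] at h ⊢; tauto) (t, w)
      have h1 := fact1 w c t
      have h2 := fact2 t c w
      rw [r1, r2] at h1
      apply mul_left_cancel₀ htw
      linear_combination prob p T t * h2 - prob p W w * h1
    have Emain : ∀ t t', Relation.EqvGen R t t' → t = t' ∨
        (prob p T t ≠ 0 ∧ prob p T t' ≠ 0 ∧
          ∀ c, prob p (fun ω => (f (U ω, T ω), T ω)) (c, t) * prob p T t' =
            prob p (fun ω => (f (U ω, T ω), T ω)) (c, t') * prob p T t) := by
      intro t t' h
      induction h with
      | rel a b hab =>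
        obtain ⟨w, h1, h2⟩ := hab
        have hwa : prob p W w ≠ 0 := fun hh =>
          h1 (le_antisymm (hh ▸ probTW_le_W a w) (prob_nonneg hp _ _))
        have hTa : prob p T a ≠ 0 := fun hh =>
          h1 (le_antisymm (hh ▸ probTW_le_T a w) (prob_nonneg hp _ _))
        have hTb : prob p T b ≠ 0 := fun hh =>
          h2 (le_antisymm (hh ▸ probTW_le_T b w) (prob_nonneg hp _ _))
        refine Or.inr ⟨hTa, hTb, fun c => ?_⟩
        have c1 := crossE a w h1 c
        have c2 := crossE b w h2 c
        apply mul_right_cancel₀ hwa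
        linear_combination prob p T b * c1 - prob p T a * c2
      | refl a => exact Or.inl rfl
      | symm a b _ ih =>
        rcases ih with h | ⟨ha, hb, hc⟩
        · exact Or.inl h.symm
        · exact Or.inr ⟨hb, ha, fun c => (hc c).symm⟩
      | trans a b c _ _ ih1 ih2 =>
        rcases ih1 with h | ⟨ha, hb, hab⟩
        · rw [h]; exact ih2
        · rcases ih2 with h2 | ⟨hb2, hc2, hbc⟩
          · rw [← h2]; exact Or.inr ⟨ha, hb, hab⟩
          · refine Or.inr ⟨ha, hc2, fun cc => ?_⟩
            apply mul_right_cancel₀ hb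
            linear_combination prob p T c * hab cc + prob p T a * hbc cc
    have hWmarg : ∀ w, prob p W w = ∑ t, prob p (fun ω => (T ω, W ω)) (t, w) :=
      marg_pair_fst p T W
    have CONST : ∀ w w', prob p W w ≠ 0 → prob p W w' ≠ 0 → g' w = g' w' → ∀ c,
        prob p (fun ω => (f (U ω, T ω), W ω)) (c, w) * prob p W w' =
        prob p (fun ω => (f (U ω, T ω), W ω)) (c, w') * prob p W w := by
      intro w w' hw hw' hgg c
      have hEx : ∃ t, prob p (fun ω' => (T ω', W ω')) (t, w) ≠ 0 := by
        by_contra hcon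
        push_neg at hcon
        exact hw (by rw [hWmarg w]; exact Finset.sum_eq_zero fun t _ => hcon t)
      have hEx' : ∃ t, prob p (fun ω' => (T ω', W ω')) (t, w') ≠ 0 := by
        by_contra hcon
        push_neg at hcon
        exact hw' (by rw [hWmarg w']; exact Finset.sum_eq_zero fun t _ => hcon t)
      have spec1 := hEx.choose_spec
      have spec2 := hEx'.choose_spec
      have hg1 : g' w = f' hEx.choose := by rw [hg'def]; simp only [dif_pos hEx]
      have hg2 : g' w' = f' hEx'.choose := by rw [hg'def]; simp only [dif_pos hEx']
      have hEq : f' hEx.choose = f' hEx'.choose := by rw [← hg1, ← hg2, hgg]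
      have hT1 : prob p T hEx.choose ≠ 0 := by
        intro hh
        apply spec1
        have h9 := probTW_le_T hEx.choose w
        rw [hh] at h9
        exact le_antisymm h9 (prob_nonneg hp _ _)
      have hT2 : prob p T hEx'.choose ≠ 0 := by
        intro hh
        apply spec2
        have h9 := probTW_le_T hEx'.choose w'
        rw [hh] at h9
        exact le_antisymm h9 (prob_nonneg hp _ _)
      have hQ : ∀ cc, prob p (fun ω => (f (U ω, T ω), T ω)) (cc, hEx.choose) *
          prob p T hEx'.choose =
          prob p (fun ω => (f (U ω, T ω), T ω)) (cc, hEx'.choose) * prob p T hEx.choose := by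
        rcases Emain _ _ (f'_rev _ _ hEq) with h | ⟨_, _, hq⟩
        · intro cc; rw [h]
        · exact hq
      have c1 := crossE hEx.choose w spec1 c
      have c2 := crossE hEx'.choose w' spec2 c
      apply mul_right_cancel₀ (mul_ne_zero hT1 hT2)
      linear_combination (-(prob p W w') * prob p T hEx'.choose) * c1 +
        (prob p W w * prob p T hEx.choose) * c2 +
        (prob p W w * prob p W w') * hQ c
    -- probabilities involving K
    have hCWK : ∀ cc w k, prob p (fun ω => (f (U ω, T ω), W ω, f' (T ω))) (cc, w, k) =
        (if g' w = k then prob p (fun ω => (f (U ω, T ω), W ω)) (cc, w) else 0) := by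
      intro cc w k
      have a1 : prob p (fun ω => (f (U ω, T ω), W ω, f' (T ω))) =
          prob p (fun ω => (f (U ω, T ω), W ω, g' (W ω))) :=
        prob_congr p (fun ω hω => by rw [hfg ω hω])
      calc prob p (fun ω => (f (U ω, T ω), W ω, f' (T ω))) (cc, w, k)
          = ∑ v : (υ × τ) × ρ, if (v.1, v.2, g' v.2) = (cc, w, k) then
              prob p (fun ω => (f (U ω, T ω), W ω)) v else 0 := by
            rw [a1]
            simpa using prob_comp p (fun ω => (f (U ω, T ω), W ω))
              (fun v => (v.1, v.2, g' v.2)) (cc, w, k)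
        _ = (if g' w = k then prob p (fun ω => (f (U ω, T ω), W ω)) (cc, w) else 0) := by
            rw [Fintype.sum_prod_type]
            rw [Finset.sum_eq_single cc (fun c' _ hc' => by
              refine Finset.sum_eq_zero fun w' _ => by simp [Prod.ext_iff, hc'])
              (fun h => absurd (Finset.mem_univ cc) h)]
            rw [Finset.sum_eq_single w (fun w' _ hw' => by simp [Prod.ext_iff, hw'])
              (fun h => absurd (Finset.mem_univ w) h)]
            simp [Prod.ext_iff]
    have hWK : ∀ w k, prob p (fun ω => (W ω, f' (T ω))) (w, k) =
        (if g' w = k then prob p W w else 0) := by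
      intro w k
      have a1 : prob p (fun ω => (W ω, f' (T ω))) = prob p (fun ω => (W ω, g' (W ω))) :=
        prob_congr p (fun ω hω => by rw [hfg ω hω])
      calc prob p (fun ω => (W ω, f' (T ω))) (w, k)
          = ∑ w' : ρ, if (w', g' w') = (w, k) then prob p W w' else 0 := by
            rw [a1]
            simpa using prob_comp p W (fun v => (v, g' v)) (w, k)
        _ = (if g' w = k then prob p W w else 0) := by
            rw [Finset.sum_eq_single w (fun w' _ hw' => by simp [Prod.ext_iff, hw'])
              (fun h => absurd (Finset.mem_univ w) h)]
            simp [Prod.ext_iff]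
    have hCK : ∀ cc k, prob p (fun ω => (f (U ω, T ω), f' (T ω))) (cc, k) =
        ∑ w', if g' w' = k then prob p (fun ω => (f (U ω, T ω), W ω)) (cc, w') else 0 := by
      intro cc k
      have a1 : prob p (fun ω => (f (U ω, T ω), f' (T ω))) =
          prob p (fun ω => (f (U ω, T ω), g' (W ω))) :=
        prob_congr p (fun ω hω => by rw [hfg ω hω])
      calc prob p (fun ω => (f (U ω, T ω), f' (T ω))) (cc, k)
          = ∑ v : (υ × τ) × ρ, if (v.1, g' v.2) = (cc, k) then
              prob p (fun ω => (f (U ω, T ω), W ω)) v else 0 := by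
            rw [a1]
            simpa using prob_comp p (fun ω => (f (U ω, T ω), W ω))
              (fun v => (v.1, g' v.2)) (cc, k)
        _ = ∑ w', if g' w' = k then prob p (fun ω => (f (U ω, T ω), W ω)) (cc, w') else 0 := by
            rw [Fintype.sum_prod_type]
            rw [Finset.sum_eq_single cc (fun c' _ hc' => by
              refine Finset.sum_eq_zero fun w' _ => by simp [Prod.ext_iff, hc'])
              (fun h => absurd (Finset.mem_univ cc) h)]
            refine Finset.sum_congr rfl fun w' _ => by simp [Prod.ext_iff]
    have hK : ∀ k, prob p (fun ω => f' (T ω)) k =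
        ∑ w', if g' w' = k then prob p W w' else 0 := by
      intro k
      have a1 : prob p (fun ω => f' (T ω)) = prob p (fun ω => g' (W ω)) :=
        prob_congr p (fun ω hω => by rw [hfg ω hω])
      rw [a1]
      exact prob_comp p W g' k
    have probCW_le_W : ∀ cc w, prob p (fun ω => (f (U ω, T ω), W ω)) (cc, w) ≤ prob p W w := by
      intro cc w
      simpa using prob_le_comp hp (fun ω => (f (U ω, T ω), W ω)) Prod.snd (cc, w)
    have bfact : ∀ cc w k,
        prob p (fun ω => (f (U ω, T ω), W ω, f' (T ω))) (cc, w, k) *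
          prob p (fun ω => f' (T ω)) k =
        prob p (fun ω => (f (U ω, T ω), f' (T ω))) (cc, k) *
          prob p (fun ω => (W ω, f' (T ω))) (w, k) := by
      intro cc w k
      rw [hCWK, hWK, hCK, hK]
      by_cases hk : g' w = k
      · simp only [if_pos hk]
        rw [Finset.mul_sum, Finset.sum_mul]
        refine Finset.sum_congr rfl fun w' _ => ?_
        by_cases hk' : g' w' = k
        · simp only [if_pos hk']
          by_cases hw : prob p W w = 0
          · have hz : prob p (fun ω => (f (U ω, T ω), W ω)) (cc, w) = 0 :=
              le_antisymm (hw ▸ probCW_le_W cc w) (prob_nonneg hp _ _)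
            rw [hz, hw]; ring
          · by_cases hw' : prob p W w' = 0
            · have hz : prob p (fun ω => (f (U ω, T ω), W ω)) (cc, w') = 0 :=
                le_antisymm (hw' ▸ probCW_le_W cc w') (prob_nonneg hp _ _)
              rw [hz, hw']; ring
            · exact CONST w w' hw hw' (hk.trans hk'.symm) cc
        · simp [hk']
      · simp [hk]
    have hα : cmi p W (fun ω => f (U ω, T ω)) T = 0 :=
      cmi_of_fact hp W (fun ω => f (U ω, T ω)) T fact1
    have hβ : cmi p (fun ω => f (U ω, T ω)) W (fun ω => f' (T ω)) = 0 :=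
      cmi_of_fact hp (fun ω => f (U ω, T ω)) W (fun ω => f' (T ω)) bfact
    -- entropy relabelings
    have r1 : ent p (fun ω => (W ω, T ω)) = ent p (fun ω => (T ω, W ω)) :=
      ent_comp_inj p (fun ω => (T ω, W ω)) (e := fun v => (v.2, v.1))
        (by intro a b h; simp only [Prod.ext_iff] at h ⊢; tauto)
    have r2 : ent p (fun ω => (W ω, f (U ω, T ω), T ω)) =
        ent p (fun ω => (T ω, W ω, f (U ω, T ω))) :=
      ent_comp_inj p (fun ω => (T ω, W ω, f (U ω, T ω))) (e := fun v => (v.2.1, v.2.2, v.1))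
        (by intro a b h; simp only [Prod.ext_iff] at h ⊢; tauto)
    have r3 : ent p (fun ω => (f (U ω, T ω), T ω)) = ent p (fun ω => (T ω, f (U ω, T ω))) :=
      ent_comp_inj p (fun ω => (T ω, f (U ω, T ω))) (e := fun v => (v.2, v.1))
        (by intro a b h; simp only [Prod.ext_iff] at h ⊢; tauto)
    have r4 : ent p (fun ω => (W ω, f' (T ω))) = ent p W := by
      have a1 : ent p (fun ω => (W ω, f' (T ω))) = ent p (fun ω => (W ω, g' (W ω))) :=
        ent_congr p (fun ω hω => by rw [hfg ω hω])
      rw [a1]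
      exact ent_comp_inj p W (e := fun w => (w, g' w)) (fun a b h => congrArg Prod.fst h)
    have r5 : ent p (fun ω => (T ω, f' (T ω))) = ent p T :=
      ent_comp_inj p T (e := fun t => (t, f' t)) (fun a b h => congrArg Prod.fst h)
    have r6 : ent p (fun ω => (T ω, W ω, f' (T ω))) = ent p (fun ω => (T ω, W ω)) :=
      ent_comp_inj p (fun ω => (T ω, W ω)) (e := fun v => (v.1, v.2, f' v.1))
        (by intro a b h; simp only [Prod.ext_iff] at h ⊢; tauto)
    have r7 : ent p (fun ω => (f (U ω, T ω), W ω, f' (T ω))) =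
        ent p (fun ω => (f (U ω, T ω), W ω)) := by
      have a1 : ent p (fun ω => (f (U ω, T ω), W ω, f' (T ω))) =
          ent p (fun ω => (f (U ω, T ω), W ω, g' (W ω))) :=
        ent_congr p (fun ω hω => by rw [hfg ω hω])
      rw [a1]
      exact ent_comp_inj p (fun ω => (f (U ω, T ω), W ω)) (e := fun v => (v.1, v.2, g' v.2))
        (by intro a b h; simp only [Prod.ext_iff] at h ⊢; tauto)
    have r8 : ent p (fun ω => (f (U ω, T ω), W ω)) = ent p (fun ω => (W ω, f (U ω, T ω))) :=
      ent_comp_inj p (fun ω => (W ω, f (U ω, T ω))) (e := fun v => (v.2, v.1))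
        (by intro a b h; simp only [Prod.ext_iff] at h ⊢; tauto)
    have r9 : ent p (fun ω => f (U ω, T ω)) ≤
        ent p (fun ω => (f (U ω, T ω), f' (T ω))) :=
      ent_le_ent_pair hp (fun ω => f (U ω, T ω)) (fun ω => f' (T ω))
    simp only [cmi] at hα hβ ⊢
    linarith [r1, r2, r3, r4, r5, r6, r7, r8, r9]
  have step2 : cmi p T W (fun ω => f (U ω, T ω)) ≤
      cmi p T (fun ω => (V ω, W ω)) (fun ω => f (U ω, T ω)) := by
    have c1 : cmi p T (fun ω => (V ω, W ω)) (fun ω => f (U ω, T ω)) =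
        cmi p T W (fun ω => f (U ω, T ω)) +
          cmi p T V (fun ω => (W ω, f (U ω, T ω))) :=
      cmi_decomp p T V W (fun ω => f (U ω, T ω))
    have c2 : 0 ≤ cmi p T V (fun ω => (W ω, f (U ω, T ω))) :=
      cmi_nonneg hp hsum _ _ _
    linarith
  have step3 : cmi p T (fun ω => (V ω, W ω)) (fun ω => f (U ω, T ω)) ≤
      cmi p (fun ω => (U ω, T ω)) (fun ω => (V ω, W ω)) (fun ω => f (U ω, T ω)) := by
    have c1 : cmi p (fun ω => (U ω, T ω)) (fun ω => (V ω, W ω)) (fun ω => f (U ω, T ω)) =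
        cmi p (fun ω => (V ω, W ω)) (fun ω => (U ω, T ω)) (fun ω => f (U ω, T ω)) :=
      cmi_comm p _ _ _
    have c2 : cmi p (fun ω => (V ω, W ω)) (fun ω => (U ω, T ω)) (fun ω => f (U ω, T ω)) =
        cmi p (fun ω => (V ω, W ω)) T (fun ω => f (U ω, T ω)) +
          cmi p (fun ω => (V ω, W ω)) U (fun ω => (T ω, f (U ω, T ω))) :=
      cmi_decomp p (fun ω => (V ω, W ω)) U T (fun ω => f (U ω, T ω))
    have c3 : cmi p (fun ω => (V ω, W ω)) T (fun ω => f (U ω, T ω)) =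
        cmi p T (fun ω => (V ω, W ω)) (fun ω => f (U ω, T ω)) :=
      cmi_comm p _ _ _
    have c4 : 0 ≤ cmi p (fun ω => (V ω, W ω)) U (fun ω => (T ω, f (U ω, T ω))) :=
      cmi_nonneg hp hsum _ _ _
    linarith
  calc sInf _ ≤ cmi p T W (fun ω => f' (T ω)) := csInf_le h_bdd h_in
    _ ≤ _ := le_trans step1 (le_trans step2 step3)
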